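/- arXiv:1808.08034 — 4 statements merged into one kernel-verified Lean document; each statement's English description precedes it below -/
import Mathlib

section
/- Let T be a topological space and U an open set of ℂ × T. If f : U → ℂ is continuous and for each t ∈ T the map z ↦ f(z,t) is holomorphic on the slice {z | (z,t) ∈ U}, then the partial derivative ∂f/∂z : U → ℂ is continuous on U. -/
/-!
Near a point `(z₀, t₀)` of `U`, pick a closed disc `closedBall z₀ R` and an open `v ∋ t₀` with
`closedBall z₀ R ×ˢ v ⊆ U`. On `ball z₀ R ×ˢ v` the Cauchy formula writes `∂f/∂z (z, t)` as
`(2πi)⁻¹ ∮_{|w - z₀| = R} f(w, t) / (w - z)² dw`, an integral over a fixed compact contour of an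
integrand jointly continuous in `(z, t)` and the contour parameter; such an integral is continuous.
-/

open Metric Set Complex Real

theorem continuousOn_circleIntegral_of_continuousOn {X E : Type*} [TopologicalSpace X]
    [NormedAddCommGroup E] [NormedSpace ℂ E] {F : X → ℂ → E} {s : Set X} {c : ℂ} {R : ℝ}
    (hR : 0 ≤ R) (hF : ContinuousOn (fun q : X × ℂ => F q.1 q.2) (s ×ˢ sphere c R)) :
    ContinuousOn (fun x => ∮ z in C(c, R), F x z) s := by
  rw [continuousOn_iff_continuous_domRestrict]
  refine intervalIntegral.continuous_parametric_intervalIntegral_of_continuous' ?_ 0 (2 * π)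
  have hmap : Continuous fun q : s × ℝ => circleMap c R q.2 := by fun_prop
  refine Continuous.smul (by simpa only [deriv_circleMap] using by fun_prop) ?_
  exact hF.comp_continuous (continuous_subtype_val.comp continuous_fst |>.prodMk hmap)
    fun q => ⟨q.1.2, circleMap_mem_sphere c hR q.2⟩

theorem continuousOn_circleIntegral_sub_sq_inv_smul {T E : Type*} [TopologicalSpace T]
    [NormedAddCommGroup E] [NormedSpace ℂ E] {f : ℂ × T → E} {c : ℂ} {R : ℝ} {v : Set T}
    (hf : ContinuousOn f (sphere c R ×ˢ v)) :
    ContinuousOn (fun p : ℂ × T => ∮ z in C(c, R), ((z - p.1) ^ 2)⁻¹ • f (z, p.2))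
      (ball c R ×ˢ v) := by
  rcases lt_or_ge R 0 with hR | hR
  · simp [ball_eq_empty.2 hR.le]
  refine continuousOn_circleIntegral_of_continuousOn hR (ContinuousOn.smul ?_ ?_)
  · refine ((continuous_snd.sub (continuous_fst.comp continuous_fst)).pow 2).continuousOn.inv₀ ?_
    rintro ⟨⟨w, t⟩, z⟩ ⟨⟨hw, -⟩, hz⟩ h
    exact sphere_disjoint_ball.ne_of_mem hz hw (sub_eq_zero.mp (pow_eq_zero_iff two_ne_zero |>.mp h))
  · exact hf.comp (by fun_prop) fun q hq => ⟨hq.2, hq.1.2⟩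

/-- If `U` is open in `ℂ × T`, `f` is continuous on `U` and holomorphic in the
first variable on each slice, then the fiberwise partial derivative `∂f/∂z` is continuous on `U`. -/
theorem stmt_0 {T : Type*} [TopologicalSpace T] (U : Set (ℂ × T)) (hU : IsOpen U)
    (f : ℂ × T → ℂ) (hf : ContinuousOn f U)
    (hol : ∀ p ∈ U, DifferentiableAt ℂ (fun z : ℂ => f (z, p.2)) p.1) :
    ContinuousOn (fun p : ℂ × T => deriv (fun z : ℂ => f (z, p.2)) p.1) U := by
  refine continuousOn_of_locally_continuousOn fun p hp => ?_
  obtain ⟨u, v, hu, hv, hpu, hpv, huv⟩ := isOpen_prod_iff.1 hU p.1 p.2 hp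
  obtain ⟨R, hR, hRu⟩ := nhds_basis_closedBall.mem_iff.1 (hu.mem_nhds hpu)
  have hball : closedBall p.1 R ×ˢ v ⊆ U := (prod_mono hRu subset_rfl).trans huv
  refine ⟨ball p.1 R ×ˢ v, isOpen_ball.prod hv, ⟨mem_ball_self hR, hpv⟩, ?_⟩
  have hcauchy := (continuousOn_const (c := (2 * π * I : ℂ)⁻¹)).smul
    (continuousOn_circleIntegral_sub_sq_inv_smul
      (hf.mono ((prod_mono sphere_subset_closedBall subset_rfl).trans hball)))
  refine (hcauchy.congr ?_).mono inter_subset_right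
  rintro ⟨z, t⟩ ⟨hz, ht⟩
  exact (two_pi_I_inv_smul_circleIntegral_sub_sq_inv_smul_of_differentiable
    (hU.preimage (Continuous.prodMk_left t)) (fun w hw => hball ⟨hw, ht⟩)
    (fun w hw => (hol (w, t) hw).differentiableWithinAt) hz).symm
end

section
/- Let ε > 0 and let X, Y be n-dimensional complex inner product spaces. Let f be a holomorphic map from {z ∈ X | ‖z‖ < ε} to {w ∈ Y | ‖w‖ < 1}. Then for all z ∈ X with ‖z‖ ≤ ε/4, one has ‖f(z) − (f(0) + (Df)₀(z))‖ ≤ (16n³/ε²)‖z‖². -/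
/-!
Restrict `f` to the complex line through `z`: `g w = f (w • z)` is holomorphic on the disc of
radius `ρ / ‖z‖` and bounded by `M` on its boundary whenever `‖f‖ ≤ M` on the sphere of radius `ρ`,
so by Cauchy's estimate its `k`-th Taylor coefficient is at most `M (‖z‖ / ρ) ^ k`. The remainder
`f z - f 0 - f'(0) z` is the sum of the terms of order `k ≥ 2` of this series at `w = 1`, hence a
geometric tail. With `ρ = ε / 2`, `M = 1` and `‖z‖ ≤ ε / 4` the tail is at most `8 ‖z‖² / ε²`,
and `8 ≤ 16 n³` since `X ≠ 0`.
-/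

open Metric Set

section OneVariable

variable {E : Type*} [NormedAddCommGroup E] [NormedSpace ℂ E]

theorem norm_cauchyPowerSeries_le_of_forall_mem_sphere_norm_le {f : ℂ → E} {c : ℂ} {R C : ℝ}
    (hR : 0 < R) (hC : ∀ z ∈ sphere c R, ‖f z‖ ≤ C) (k : ℕ) :
    ‖cauchyPowerSeries f c R k‖ ≤ C * R⁻¹ ^ k := by
  have hint : ∫ θ in (0 : ℝ)..2 * Real.pi, ‖f (circleMap c R θ)‖ ≤ C * (2 * Real.pi) := by
    have := intervalIntegral.norm_integral_le_of_norm_le_const (a := 0) (b := 2 * Real.pi)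
      (f := fun θ => ‖f (circleMap c R θ)‖)
      fun θ _ => (norm_norm _).trans_le (hC _ (circleMap_mem_sphere c hR.le θ))
    rw [Real.norm_eq_abs, sub_zero, abs_of_pos Real.two_pi_pos] at this
    exact (le_abs_self _).trans this
  calc ‖cauchyPowerSeries f c R k‖
      ≤ ((2 * Real.pi)⁻¹ * ∫ θ in (0 : ℝ)..2 * Real.pi, ‖f (circleMap c R θ)‖) * |R|⁻¹ ^ k :=
        norm_cauchyPowerSeries_le f c R k
    _ ≤ ((2 * Real.pi)⁻¹ * (C * (2 * Real.pi))) * R⁻¹ ^ k := by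
        rw [abs_of_pos hR]; gcongr
    _ = C * R⁻¹ ^ k := by field_simp

theorem norm_sub_sub_smul_deriv_le [CompleteSpace E] {f : ℂ → E} {c w : ℂ} {r C : ℝ}
    (hf : DifferentiableOn ℂ f (closedBall c r)) (hC : ∀ z ∈ sphere c r, ‖f z‖ ≤ C)
    (hw : ‖w‖ < r) :
    ‖f (c + w) - (f c + w • deriv f c)‖ ≤ C * (‖w‖ / r) ^ 2 * (1 - ‖w‖ / r)⁻¹ := by
  have hr : 0 < r := (norm_nonneg w).trans_lt hw
  lift r to NNReal using hr.le
  set p := cauchyPowerSeries f c r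
  set q := ‖w‖ / r
  have hq : q < 1 := (div_lt_one hr).2 hw
  have hp : HasFPowerSeriesOnBall f p c r := hf.hasFPowerSeriesOnBall (mod_cast hr)
  have hsum : HasSum (fun k => p k fun _ => w) (f (c + w)) :=
    hp.hasSum (by simpa [← coe_nnnorm, ← ENNReal.coe_lt_coe] using hw)
  have hterm : ∀ k, ‖p k fun _ => w‖ ≤ C * q ^ k := fun k =>
    calc ‖p k fun _ => w‖ ≤ ‖p k‖ * ‖w‖ ^ k := ((p k).le_opNorm _).trans_eq (by simp)
      _ ≤ C * (r : ℝ)⁻¹ ^ k * ‖w‖ ^ k := by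
          gcongr; exact norm_cauchyPowerSeries_le_of_forall_mem_sphere_norm_le hr hC k
      _ = C * q ^ k := by rw [mul_assoc, ← mul_pow, inv_mul_eq_div]
  have hlinear : ∑ k ∈ Finset.range 2, (p k fun _ => w) = f c + w • deriv f c := by
    rw [Finset.sum_range_succ, Finset.sum_range_one, hp.coeff_zero,
      FormalMultilinearSeries.apply_eq_pow_smul_coeff, hp.hasFPowerSeriesAt.deriv, pow_one]
    rfl
  have htail := (hasSum_nat_add_iff' 2).2 hsum
  rw [hlinear] at htail
  refine htail.norm_le_of_bounded
    ((hasSum_geometric_of_lt_one (by positivity) hq).mul_left (C * q ^ 2)) fun k => ?_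
  calc _ ≤ C * q ^ (k + 2) := hterm (k + 2)
    _ = C * q ^ 2 * q ^ k := by ring

end OneVariable

theorem norm_sub_sub_fderiv_le {X Y : Type*} [NormedAddCommGroup X] [NormedSpace ℂ X]
    [NormedAddCommGroup Y] [NormedSpace ℂ Y] [CompleteSpace Y] {f : X → Y} {ρ M : ℝ}
    (hf : DifferentiableOn ℂ f (closedBall 0 ρ)) (hM : ∀ x ∈ sphere (0 : X) ρ, ‖f x‖ ≤ M)
    {z : X} (hz : ‖z‖ < ρ) :
    ‖f z - (f 0 + fderiv ℂ f 0 z)‖ ≤ M * (‖z‖ / ρ) ^ 2 * (1 - ‖z‖ / ρ)⁻¹ := by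
  rcases eq_or_ne z 0 with rfl | hz0
  · simp
  have hρ : 0 < ρ := (norm_nonneg z).trans_lt hz
  have hz0' : 0 < ‖z‖ := norm_pos_iff.2 hz0
  set g : ℂ → Y := fun w => f (w • z)
  have hmaps : MapsTo (· • z) (closedBall (0 : ℂ) (ρ / ‖z‖)) (closedBall 0 ρ) := fun w hw => by
    rw [mem_closedBall_zero_iff, le_div_iff₀ hz0'] at hw
    rwa [mem_closedBall_zero_iff, norm_smul]
  have hg : DifferentiableOn ℂ g (closedBall 0 (ρ / ‖z‖)) :=
    hf.comp (differentiable_id.smul_const z).differentiableOn hmaps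
  have hgM : ∀ w ∈ sphere (0 : ℂ) (ρ / ‖z‖), ‖g w‖ ≤ M := fun w hw => by
    rw [mem_sphere_zero_iff_norm] at hw
    exact hM _ (by rw [mem_sphere_zero_iff_norm, norm_smul, hw, div_mul_cancel₀ _ hz0'.ne'])
  have hg' : deriv g 0 = fderiv ℂ f 0 z := by
    have hf0 : HasFDerivAt f (fderiv ℂ f 0) ((0 : ℂ) • z) := by
      rw [zero_smul]
      exact (hf.differentiableAt (closedBall_mem_nhds 0 hρ)).hasFDerivAt
    have hline : HasDerivAt (· • z) z (0 : ℂ) := by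
      simpa using (hasDerivAt_id (0 : ℂ)).smul_const z
    simpa [g, Function.comp_def] using (hf0.comp_hasDerivAt 0 hline).deriv
  have h1 : ‖(1 : ℂ)‖ < ρ / ‖z‖ := by rwa [norm_one, one_lt_div hz0']
  have key := norm_sub_sub_smul_deriv_le hg hgM h1
  rw [zero_add, one_smul, hg', norm_one, one_div_div] at key
  simpa [g] using key

theorem stmt_3_general {X Y : Type*} [NormedAddCommGroup X] [InnerProductSpace ℂ X]
    [NormedAddCommGroup Y] [InnerProductSpace ℂ Y]
    [FiniteDimensional ℂ X] [FiniteDimensional ℂ Y] (n : ℕ)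
    (hX : Module.finrank ℂ X = n)
    (ε : ℝ) (f : X → Y)
    (hf : ∀ z ∈ Metric.ball (0 : X) ε, DifferentiableAt ℂ f z)
    (hrange : ∀ z ∈ Metric.ball (0 : X) ε, f z ∈ Metric.ball (0 : Y) 1) :
    ∀ z : X, ‖z‖ ≤ ε / 4 →
      ‖f z - (f 0 + fderiv ℂ f 0 z)‖ ≤ 16 * (n : ℝ) ^ 3 / ε ^ 2 * ‖z‖ ^ 2 := by
  intro z hz
  rcases eq_or_ne z 0 with rfl | hz0
  · simp
  have hz0' : 0 < ‖z‖ := norm_pos_iff.2 hz0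
  have hε : 0 < ε := by linarith
  have hn : (1 : ℝ) ≤ n := by
    have : Nontrivial X := nontrivial_of_ne z 0 hz0
    exact_mod_cast hX ▸ Module.finrank_pos
  have hsub : closedBall (0 : X) (ε / 2) ⊆ ball 0 ε := closedBall_subset_ball (by linarith)
  have key := norm_sub_sub_fderiv_le (ρ := ε / 2) (M := 1)
    (fun x hx => (hf x (hsub hx)).differentiableWithinAt)
    (fun x hx => (mem_ball_zero_iff.1 (hrange x (hsub (sphere_subset_closedBall hx)))).le)
    (show ‖z‖ < ε / 2 by linarith)
  have hq : 1 / 2 ≤ 1 - ‖z‖ / (ε / 2) := by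
    rw [le_sub_comm, div_le_iff₀ (by positivity)]; linarith
  calc ‖f z - (f 0 + fderiv ℂ f 0 z)‖
      ≤ 1 * (‖z‖ / (ε / 2)) ^ 2 * (1 - ‖z‖ / (ε / 2))⁻¹ := key
    _ ≤ 1 * (‖z‖ / (ε / 2)) ^ 2 * (1 / 2)⁻¹ := by gcongr
    _ = 8 / ε ^ 2 * ‖z‖ ^ 2 := by field_simp; ring
    _ ≤ 16 * (n : ℝ) ^ 3 / ε ^ 2 * ‖z‖ ^ 2 := by
        gcongr
        nlinarith [one_le_pow₀ (n := 3) hn]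

/-- Quantitative second-order Taylor remainder bound for a holomorphic map between
`n`-dimensional complex inner product spaces mapping the ball of radius `ε` into the unit ball. -/
theorem stmt_3 {X Y : Type*} [NormedAddCommGroup X] [InnerProductSpace ℂ X]
    [NormedAddCommGroup Y] [InnerProductSpace ℂ Y]
    [FiniteDimensional ℂ X] [FiniteDimensional ℂ Y] (n : ℕ)
    (hX : Module.finrank ℂ X = n) (hY : Module.finrank ℂ Y = n)
    (ε : ℝ) (hε : 0 < ε) (f : X → Y)
    (hf : ∀ z ∈ Metric.ball (0 : X) ε, DifferentiableAt ℂ f z)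
    (hrange : ∀ z ∈ Metric.ball (0 : X) ε, f z ∈ Metric.ball (0 : Y) 1) :
    ∀ z : X, ‖z‖ ≤ ε / 4 →
      ‖f z - (f 0 + fderiv ℂ f 0 z)‖ ≤ 16 * (n : ℝ) ^ 3 / ε ^ 2 * ‖z‖ ^ 2 :=
  stmt_3_general n hX ε f hf hrange
end

section
/- Let U be an open subset of ℂᵐ, f : U → ℂᵐ holomorphic, V an open subset of U, and w : [0,1] × V → U a map satisfying ∂w/∂s(s, z) = f(w(s, z)) and w(0, z) = z, such that for each s ∈ [0,1] the map z ↦ w(s, z) is Fréchet differentiable (as a map of real variables) with derivative continuous in (s,z). Then for each s ∈ [0,1], the map z ↦ w(s, z) is holomorphic on V. -/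
open Set

set_option maxHeartbeats 1000000 in
set_option synthInstance.maxHeartbeats 200000 in
/-- the flow of a holomorphic vector field depends holomorphically on the
initial condition: if `f` is holomorphic on the open set `U ⊆ ℂᵐ`, `V ⊆ U` is open, and
`w : [0,1] × V → U` satisfies `∂w/∂s = f(w)`, `w(0,z) = z`, and is (real) Fréchet
differentiable in `z` with derivative `W` continuous in `(s,z)`, then for each `s ∈ [0,1]`
the map `z ↦ w(s,z)` is holomorphic on `V`. -/
theorem stmt_13 (m : ℕ) (U : Set (Fin m → ℂ)) (hU : IsOpen U)
    (f : (Fin m → ℂ) → (Fin m → ℂ)) (hf : ∀ z ∈ U, DifferentiableAt ℂ f z)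
    (V : Set (Fin m → ℂ)) (hV : IsOpen V) (hVU : V ⊆ U)
    (w : ℝ × (Fin m → ℂ) → (Fin m → ℂ))
    (hmem : ∀ s ∈ Icc (0 : ℝ) 1, ∀ z ∈ V, w (s, z) ∈ U)
    (hode : ∀ s ∈ Icc (0 : ℝ) 1, ∀ z ∈ V,
      HasDerivWithinAt (fun s' : ℝ => w (s', z)) (f (w (s, z))) (Icc (0 : ℝ) 1) s)
    (hinit : ∀ z ∈ V, w (0, z) = z)
    (W : ℝ × (Fin m → ℂ) → ((Fin m → ℂ) →L[ℝ] (Fin m → ℂ)))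
    (hW : ∀ s ∈ Icc (0 : ℝ) 1, ∀ z ∈ V,
      HasFDerivAt (fun z' : Fin m → ℂ => w (s, z')) (W (s, z)) z)
    (hWcont : ContinuousOn W (Icc (0 : ℝ) 1 ×ˢ V)) :
    ∀ s ∈ Icc (0 : ℝ) 1, ∀ z ∈ V, DifferentiableAt ℂ (fun z' : Fin m → ℂ => w (s, z')) z := by
  intro s hs z₀ hz₀
  have hfc : ContinuousOn f U := fun z hz => ((hf z hz).restrictScalars ℝ).continuousAt.continuousWithinAt
  -- continuity in time
  have hws : ∀ z ∈ V, ContinuousOn (fun t : ℝ => w (t, z)) (Icc 0 1) :=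
    fun z hz t ht => (hode t ht z hz).continuousWithinAt
  -- a closed ball around z₀ inside V
  obtain ⟨r, hr0, hrV⟩ : ∃ r > 0, Metric.closedBall z₀ r ⊆ V :=
    (Metric.nhds_basis_closedBall.mem_iff).1 (hV.mem_nhds hz₀)
  set K : Set (ℝ × (Fin m → ℂ)) := Icc (0:ℝ) 1 ×ˢ Metric.closedBall z₀ r with hKdef
  have hK : IsCompact K := isCompact_Icc.prod (isCompact_closedBall _ _)
  have hKsub : K ⊆ Icc (0:ℝ) 1 ×ˢ V := Set.prod_mono_right hrV
  obtain ⟨C, hC⟩ := hK.exists_bound_of_continuousOn (hWcont.mono hKsub)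
  have hz₀K : ((0:ℝ), z₀) ∈ K := ⟨⟨le_refl 0, zero_le_one⟩, Metric.mem_closedBall_self hr0.le⟩
  have hC0 : 0 ≤ C := le_trans (norm_nonneg _) (hC _ hz₀K)
  -- Lipschitz in space on the closed ball
  have hwlip : ∀ t ∈ Icc (0:ℝ) 1, ∀ x ∈ Metric.closedBall z₀ r, ∀ y ∈ Metric.closedBall z₀ r,
      ‖w (t, x) - w (t, y)‖ ≤ C * ‖x - y‖ := by
    intro t ht x hx y hy
    exact (convex_closedBall z₀ r).norm_image_sub_le_of_norm_hasFDerivWithin_le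
      (fun u hu => (hW t ht u (hrV hu)).hasFDerivWithinAt)
      (fun u hu => hC (t, u) ⟨ht, hu⟩) hy hx
  -- joint continuity of w on K
  have hwcont : ContinuousOn w K := by
    rintro ⟨s₁, z₁⟩ ⟨hs₁, hz₁⟩
    rw [Metric.continuousWithinAt_iff]
    intro ε hε
    have h1 := (hws z₁ (hrV hz₁) s₁ hs₁)
    rw [Metric.continuousWithinAt_iff] at h1
    obtain ⟨δ₁, hδ₁, h1⟩ := h1 (ε/2) (by positivity)
    refine ⟨min δ₁ (ε / 2 / (C+1)), by positivity, ?_⟩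
    rintro ⟨t, x⟩ ⟨ht, hx⟩ hd
    have hdt : dist t s₁ < δ₁ := by
      refine lt_of_le_of_lt ?_ (lt_of_lt_of_le hd (min_le_left _ _))
      rw [Prod.dist_eq]; exact le_max_left _ _
    have hdx : dist x z₁ < ε / 2 / (C+1) := by
      refine lt_of_le_of_lt ?_ (lt_of_lt_of_le hd (min_le_right _ _))
      rw [Prod.dist_eq]; exact le_max_right _ _
    have e1 : dist (w (t, x)) (w (t, z₁)) ≤ C * dist x z₁ := by
      rw [dist_eq_norm, dist_eq_norm]
      exact hwlip t ht x hx z₁ hz₁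
    have e2 : dist (w (t, z₁)) (w (s₁, z₁)) < ε/2 := h1 ht hdt
    have e3 : C * dist x z₁ < ε/2 := by
      rcases eq_or_lt_of_le hC0 with h | h
      · rw [← h]; simpa using half_pos hε
      · calc C * dist x z₁ < C * (ε / 2 / (C+1)) := by
              exact mul_lt_mul_of_pos_left hdx h
          _ ≤ ε/2 := by
              rw [div_div]
              rw [mul_comm]
              rw [div_mul_eq_mul_div, div_le_iff₀ (by positivity)]
              nlinarith
    calc dist (w (t, x)) (w (s₁, z₁))
        ≤ dist (w (t, x)) (w (t, z₁)) + dist (w (t, z₁)) (w (s₁, z₁)) := dist_triangle _ _ _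
      _ < ε/2 + ε/2 := add_lt_add_of_le_of_lt (le_trans e1 e3.le) e2 |>.trans_le (le_refl _)
      _ = ε := add_halves ε
  -- compact image, and neighborhood of it inside U
  set Kw : Set (Fin m → ℂ) := w '' K with hKwdef
  have hKw : IsCompact Kw := hK.image_of_continuousOn hwcont
  have hKwU : Kw ⊆ U := by
    rintro y ⟨⟨t, x⟩, ⟨ht, hx⟩, rfl⟩
    exact hmem t ht x (hrV hx)
  obtain ⟨δ, hδ0, hδU⟩ := hKw.exists_cthickening_subset_open hU hKwU
  obtain ⟨M, hM⟩ := (hKw.cthickening).exists_bound_of_continuousOn (hfc.mono hδU)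
  have hKwne : w ((0:ℝ), z₀) ∈ Kw := mem_image_of_mem w hz₀K
  have hM0 : 0 ≤ M := le_trans (norm_nonneg _)
    (hM _ (Metric.self_subset_cthickening _ hKwne))
  set D : ℝ := (2 * M + 1) / δ with hDdef
  have hD0 : 0 ≤ D := by positivity
  -- Cauchy estimate: the derivative of f is bounded by D on Kw
  have hDf : ∀ y ∈ Kw, ‖fderiv ℂ f y‖ ≤ D := by
    intro y hy
    refine ContinuousLinearMap.opNorm_le_bound _ hD0 fun v => ?_
    rcases eq_or_ne v 0 with rfl | hv
    · simp
    have hv0 : (0:ℝ) < ‖v‖ := norm_pos_iff.2 hv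
    have hRpos : (0:ℝ) < δ / ‖v‖ := by positivity
    have hmemU : ∀ ζ ∈ Metric.ball (0:ℂ) (δ / ‖v‖), y + ζ • v ∈ Metric.cthickening δ Kw := by
      intro ζ hζ
      apply Metric.closedBall_subset_cthickening hy δ
      rw [Metric.mem_closedBall, dist_eq_norm, add_sub_cancel_left, norm_smul]
      rw [Metric.mem_ball, dist_zero_right] at hζ
      calc ‖ζ‖ * ‖v‖ ≤ (δ / ‖v‖) * ‖v‖ := by
            exact mul_le_mul_of_nonneg_right hζ.le (norm_nonneg v)
        _ = δ := by field_simp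
    set g : ℂ → (Fin m → ℂ) := fun ζ => f (y + ζ • v) with hgdef
    have hgd : DifferentiableOn ℂ g (Metric.ball (0:ℂ) (δ / ‖v‖)) := by
      intro ζ hζ
      have h1 : DifferentiableAt ℂ f (y + ζ • v) := hf _ (hδU (hmemU ζ hζ))
      have h2 : DifferentiableAt ℂ (fun ζ' : ℂ => y + ζ' • v) ζ :=
        (differentiableAt_id.smul_const v).const_add y
      exact (h1.comp ζ h2).differentiableWithinAt
    have hmaps : MapsTo g (Metric.ball (0:ℂ) (δ / ‖v‖)) (Metric.ball (g 0) (2 * M + 1)) := by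
      intro ζ hζ
      rw [Metric.mem_ball, dist_eq_norm]
      have b1 : ‖g ζ‖ ≤ M := hM _ (hmemU ζ hζ)
      have b2 : ‖g 0‖ ≤ M := hM _ (hmemU 0 (Metric.mem_ball_self hRpos))
      calc ‖g ζ - g 0‖ ≤ ‖g ζ‖ + ‖g 0‖ := norm_sub_le _ _
        _ ≤ M + M := add_le_add b1 b2
        _ < 2 * M + 1 := by linarith
    have hder : HasDerivAt g ((fderiv ℂ f y) v) 0 := by
      have h1 : HasFDerivAt f (fderiv ℂ f y) (y + (0:ℂ) • v) := by
        simpa using (hf y (hKwU hy)).hasFDerivAt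
      have h2 : HasDerivAt (fun ζ : ℂ => y + ζ • v) v 0 := by
        simpa using ((hasDerivAt_id (0:ℂ)).smul_const v).const_add y
      exact h1.comp_hasDerivAt 0 h2
    have := Complex.norm_deriv_le_div_of_mapsTo_ball hgd (hmaps.mono_right Metric.ball_subset_closedBall) hRpos
    rw [hder.deriv] at this
    calc ‖(fderiv ℂ f y) v‖ ≤ (2 * M + 1) / (δ / ‖v‖) := this
      _ = D * ‖v‖ := by rw [hDdef]; field_simp
  clear_value D
  -- the complex structure J, the coefficient G and the solution A of the linearized ODE
  set J : (Fin m → ℂ) →L[ℝ] (Fin m → ℂ) := Complex.I • ContinuousLinearMap.id ℝ (Fin m → ℂ)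
    with hJdef
  set G : ℝ → ((Fin m → ℂ) →L[ℝ] (Fin m → ℂ)) :=
    fun t => (fderiv ℂ f (w (t, z₀))).restrictScalars ℝ with hGdef
  set A : ℝ → ((Fin m → ℂ) →L[ℝ] (Fin m → ℂ)) := fun t => W (t, z₀) with hAdef
  have hz₀b : z₀ ∈ Metric.closedBall z₀ r := Metric.mem_closedBall_self hr0.le
  have hGnorm : ∀ t ∈ Icc (0:ℝ) 1, ‖G t‖ ≤ D := by
    intro t ht
    rw [hGdef]
    simpa [ContinuousLinearMap.norm_restrictScalars] using
      hDf _ (mem_image_of_mem w (⟨ht, hz₀b⟩ : (t, z₀) ∈ K))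
  have hAcont : ContinuousOn A (Icc 0 1) :=
    hWcont.comp ((continuous_id.prodMk continuous_const).continuousOn)
      (fun t ht => ⟨ht, hz₀⟩)
  have hAnorm : ∀ t ∈ Icc (0:ℝ) 1, ‖A t‖ ≤ C := fun t ht => hC (t, z₀) ⟨ht, hz₀b⟩
  -- measurability of G
  have hGsm : MeasureTheory.AEStronglyMeasurable G
      (MeasureTheory.volume.restrict (Icc (0:ℝ) 1)) := by
    have hwz₀m : AEMeasurable (fun t : ℝ => w (t, z₀))
        (MeasureTheory.volume.restrict (Icc (0:ℝ) 1)) :=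
      (hws z₀ hz₀).aemeasurable measurableSet_Icc
    have h2 := (measurable_fderiv ℂ f).comp_aemeasurable hwz₀m
    have h3 := ((ContinuousLinearMap.restrictScalarsIsometry ℂ (Fin m → ℂ) (Fin m → ℂ)
      ℝ ℝ).continuous.measurable).comp_aemeasurable h2
    exact h3.aestronglyMeasurable
  have hAsm : MeasureTheory.AEStronglyMeasurable A
      (MeasureTheory.volume.restrict (Icc (0:ℝ) 1)) :=
    hAcont.aestronglyMeasurable measurableSet_Icc
  have hι : ∀ σ ∈ Icc (0:ℝ) 1, Set.uIoc (0:ℝ) σ ⊆ Icc (0:ℝ) 1 := by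
    intro σ hσ
    rw [uIoc_of_le hσ.1]
    exact Ioc_subset_Icc_self.trans (Icc_subset_Icc le_rfl hσ.2)
  -- integrability of bounded a.e.-measurable functions on subintervals
  have hintaux : ∀ (F : ℝ → ((Fin m → ℂ) →L[ℝ] (Fin m → ℂ))) (B : ℝ),
      MeasureTheory.AEStronglyMeasurable F (MeasureTheory.volume.restrict (Icc (0:ℝ) 1)) →
      (∀ t ∈ Icc (0:ℝ) 1, ‖F t‖ ≤ B) →
      ∀ σ ∈ Icc (0:ℝ) 1, IntervalIntegrable F MeasureTheory.volume 0 σ := by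
    intro F B hFm hFb σ hσ
    rw [intervalIntegrable_iff]
    refine MeasureTheory.Integrable.mono' (g := fun _ => B)
      ((MeasureTheory.integrableOn_const_iff (by finiteness)).2 (Or.inr ?_))
      (hFm.mono_measure (MeasureTheory.Measure.restrict_mono (hι σ hσ) le_rfl)) ?_
    · rw [uIoc_of_le hσ.1]; exact measure_Ioc_lt_top
    · exact (MeasureTheory.ae_restrict_iff' measurableSet_uIoc).2
        (Filter.Eventually.of_forall fun t ht => hFb t (hι σ hσ ht))
  have hhsm : MeasureTheory.AEStronglyMeasurable (fun t => G t * A t)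
      (MeasureTheory.volume.restrict (Icc (0:ℝ) 1)) := hGsm.mul hAsm
  have hhnorm : ∀ t ∈ Icc (0:ℝ) 1, ‖G t * A t‖ ≤ D * C := fun t ht =>
    (norm_mul_le _ _).trans (mul_le_mul (hGnorm t ht) (hAnorm t ht) (norm_nonneg _) hD0)
  have hhint : ∀ σ ∈ Icc (0:ℝ) 1, IntervalIntegrable (fun t => G t * A t)
      MeasureTheory.volume 0 σ := hintaux _ _ hhsm hhnorm
  -- the integral equation for w
  have hweq : ∀ z ∈ V, ∀ σ ∈ Icc (0:ℝ) 1,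
      w (σ, z) = z + ∫ t in (0:ℝ)..σ, f (w (t, z)) := by
    intro z hz σ hσ
    have hFTC : ∫ t in (0:ℝ)..σ, f (w (t, z)) = w (σ, z) - w (0, z) := by
      apply intervalIntegral.integral_eq_sub_of_hasDeriv_right_of_le hσ.1
      · exact (hws z hz).mono (Icc_subset_Icc le_rfl hσ.2)
      · intro t ht
        have htI : Icc (0:ℝ) 1 ∈ nhds t := Icc_mem_nhds ht.1 (lt_of_lt_of_le ht.2 hσ.2)
        exact (((hode t ⟨ht.1.le, (ht.2.le.trans hσ.2)⟩ z hz).hasDerivAt htI).hasDerivWithinAt)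
      · apply ContinuousOn.intervalIntegrable
        rw [uIcc_of_le hσ.1]
        exact hfc.comp ((hws z hz).mono (Icc_subset_Icc le_rfl hσ.2))
          (fun t ht => hmem t (Icc_subset_Icc le_rfl hσ.2 ht) z hz)
    rw [hinit z hz] at hFTC
    rw [hFTC]
    abel
  -- the integral equation for A, by differentiating under the integral sign
  have hball : Metric.ball z₀ r ⊆ V := fun x hx => hrV (Metric.ball_subset_closedBall hx)
  have hAeq : ∀ σ ∈ Icc (0:ℝ) 1, A σ = 1 + ∫ t in (0:ℝ)..σ, G t * A t := by
    intro σ hσ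
    have hpar : HasFDerivAt (fun z => ∫ t in (0:ℝ)..σ, f (w (t, z)))
        (∫ t in (0:ℝ)..σ, G t * A t) z₀ := by
      have key := intervalIntegral.hasFDerivAt_integral_of_dominated_of_fderiv_le
        (𝕜 := ℝ) (μ := MeasureTheory.volume) (F := fun x t => f (w (t, x)))
        (F' := fun x t => (fderiv ℂ f (w (t, x))).restrictScalars ℝ * W (t, x))
        (x₀ := z₀) (a := 0) (b := σ) (bound := fun _ => D * C) (Metric.ball_mem_nhds z₀ hr0)
        (Filter.eventually_of_mem (hV.mem_nhds hz₀) fun x hx =>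
          (hfc.comp ((hws x hx).mono (hι σ hσ)) fun t ht =>
            hmem t (hι σ hσ ht) x hx).aestronglyMeasurable measurableSet_uIoc)
        (by
          apply ContinuousOn.intervalIntegrable
          rw [uIcc_of_le hσ.1]
          exact hfc.comp ((hws z₀ hz₀).mono (Icc_subset_Icc le_rfl hσ.2))
            fun t ht => hmem t (Icc_subset_Icc le_rfl hσ.2 ht) z₀ hz₀)
        (hhsm.mono_measure (MeasureTheory.Measure.restrict_mono (hι σ hσ) le_rfl))
        (Filter.Eventually.of_forall fun t ht x hx => by
          have hxb : x ∈ Metric.closedBall z₀ r := Metric.ball_subset_closedBall hx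
          have htK : (t, x) ∈ K := ⟨hι σ hσ ht, hxb⟩
          calc ‖(fderiv ℂ f (w (t, x))).restrictScalars ℝ * W (t, x)‖
              ≤ ‖(fderiv ℂ f (w (t, x))).restrictScalars ℝ‖ * ‖W (t, x)‖ := norm_mul_le _ _
            _ ≤ D * C := by
                rw [ContinuousLinearMap.norm_restrictScalars]
                exact mul_le_mul (hDf _ (mem_image_of_mem w htK)) (hC _ htK)
                  (norm_nonneg _) hD0)
        intervalIntegrable_const
        (Filter.Eventually.of_forall fun t ht x hx => by
          have hxV : x ∈ V := hball hx
          have h1 : HasFDerivAt f ((fderiv ℂ f (w (t, x))).restrictScalars ℝ) (w (t, x)) :=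
            ((hf _ (hmem t (hι σ hσ ht) x hxV)).hasFDerivAt).restrictScalars ℝ
          exact h1.comp x (hW t (hι σ hσ ht) x hxV))
      exact key
    have h2 : HasFDerivAt (fun z : Fin m → ℂ => z + ∫ t in (0:ℝ)..σ, f (w (t, z)))
        (ContinuousLinearMap.id ℝ (Fin m → ℂ) + ∫ t in (0:ℝ)..σ, G t * A t) z₀ :=
      (hasFDerivAt_id z₀).add hpar
    have heq : (fun z : Fin m → ℂ => w (σ, z)) =ᶠ[nhds z₀]
        (fun z => z + ∫ t in (0:ℝ)..σ, f (w (t, z))) :=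
      Filter.eventually_of_mem (hV.mem_nhds hz₀) (fun z hz => hweq z hz σ hσ)
    have hone : (1 : (Fin m → ℂ) →L[ℝ] (Fin m → ℂ)) = ContinuousLinearMap.id ℝ _ := rfl
    rw [hAdef]
    rw [hone]
    exact (hW σ hσ z₀ hz₀).unique (h2.congr_of_eventuallyEq heq)
  -- the defect of complex linearity
  set g : ℝ → ((Fin m → ℂ) →L[ℝ] (Fin m → ℂ)) := fun t => A t * J - J * A t with hgdef
  have hJG : ∀ t : ℝ, J * G t = G t * J := by
    intro t
    refine ContinuousLinearMap.ext fun y => ?_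
    show J ((G t) y) = (G t) (J y)
    have e2 : (G t) (Complex.I • y) = Complex.I • ((G t) y) :=
      (fderiv ℂ f (w (t, z₀))).map_smul Complex.I y
    have e3 : J y = Complex.I • y := rfl
    have e4 : J ((G t) y) = Complex.I • ((G t) y) := rfl
    rw [e3, e4, e2]
  have hgeq : ∀ σ ∈ Icc (0:ℝ) 1, g σ = ∫ t in (0:ℝ)..σ, G t * g t := by
    intro σ hσ
    have hmulint : ∀ (L : ((Fin m → ℂ) →L[ℝ] (Fin m → ℂ)) →L[ℝ]
        ((Fin m → ℂ) →L[ℝ] (Fin m → ℂ))),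
        IntervalIntegrable (fun t => L (G t * A t)) MeasureTheory.volume 0 σ := by
      intro L
      have h := hhint σ hσ
      rw [intervalIntegrable_iff] at h ⊢
      exact L.integrable_comp h
    have e1 : A σ * J = J + ∫ t in (0:ℝ)..σ, (G t * A t) * J := by
      rw [hAeq σ hσ, add_mul, one_mul]
      congr 1
      have := ((ContinuousLinearMap.compL ℝ (Fin m → ℂ) (Fin m → ℂ) (Fin m → ℂ)).flip
        J).intervalIntegral_comp_comm (hhint σ hσ)
      simp only [ContinuousLinearMap.flip_apply, ContinuousLinearMap.compL_apply,
        ← ContinuousLinearMap.mul_def] at this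
      exact this.symm
    have e2 : J * A σ = J + ∫ t in (0:ℝ)..σ, J * (G t * A t) := by
      rw [hAeq σ hσ, mul_add, mul_one]
      congr 1
      have := ((ContinuousLinearMap.compL ℝ (Fin m → ℂ) (Fin m → ℂ) (Fin m → ℂ))
        J).intervalIntegral_comp_comm (hhint σ hσ)
      simp only [ContinuousLinearMap.compL_apply, ← ContinuousLinearMap.mul_def] at this
      exact this.symm
    have e3 : (fun t => (G t * A t) * J - J * (G t * A t)) = fun t => G t * g t := by
      funext t
      have h1 : J * (G t * A t) = G t * (J * A t) := by
        rw [← mul_assoc, hJG t, mul_assoc]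
      rw [h1, hgdef, mul_assoc, ← mul_sub]
    calc g σ = (A σ * J) - (J * A σ) := rfl
      _ = (∫ t in (0:ℝ)..σ, (G t * A t) * J) - ∫ t in (0:ℝ)..σ, J * (G t * A t) := by
          rw [e1, e2, add_sub_add_left_eq_sub]
      _ = ∫ t in (0:ℝ)..σ, ((G t * A t) * J - J * (G t * A t)) := by
          have hR : IntervalIntegrable (fun t => (G t * A t) * J) MeasureTheory.volume 0 σ := by
            have := hmulint
              ((ContinuousLinearMap.compL ℝ (Fin m → ℂ) (Fin m → ℂ) (Fin m → ℂ)).flip J)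
            simpa only [ContinuousLinearMap.flip_apply, ContinuousLinearMap.compL_apply,
              ← ContinuousLinearMap.mul_def] using this
          have hL : IntervalIntegrable (fun t => J * (G t * A t)) MeasureTheory.volume 0 σ := by
            have := hmulint
              (ContinuousLinearMap.compL ℝ (Fin m → ℂ) (Fin m → ℂ) (Fin m → ℂ) J)
            simpa only [ContinuousLinearMap.compL_apply,
              ← ContinuousLinearMap.mul_def] using this
          rw [← intervalIntegral.integral_sub hR hL]
      _ = ∫ t in (0:ℝ)..σ, G t * g t := by rw [e3]
  -- bounds and iteration (Grönwall)
  have hgcont : ContinuousOn g (Icc 0 1) :=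
    (hAcont.mul continuousOn_const).sub (continuousOn_const.mul hAcont)
  obtain ⟨Mg, hMg⟩ := isCompact_Icc.exists_bound_of_continuousOn hgcont
  have hMg0 : 0 ≤ Mg := le_trans (norm_nonneg _) (hMg 0 ⟨le_refl 0, zero_le_one⟩)
  have hgsm : MeasureTheory.AEStronglyMeasurable g
      (MeasureTheory.volume.restrict (Icc (0:ℝ) 1)) :=
    hgcont.aestronglyMeasurable measurableSet_Icc
  have hGgint : ∀ σ ∈ Icc (0:ℝ) 1, IntervalIntegrable (fun t => G t * g t)
      MeasureTheory.volume 0 σ :=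
    hintaux _ (D * Mg) (hGsm.mul hgsm) (fun t ht =>
      (norm_mul_le _ _).trans (mul_le_mul (hGnorm t ht) (hMg t ht) (norm_nonneg _) hD0))
  have hind : ∀ n : ℕ, ∀ σ ∈ Icc (0:ℝ) 1, ‖g σ‖ ≤ Mg * (D * σ) ^ n / n.factorial := by
    intro n
    induction n with
    | zero => intro σ hσ; simpa using hMg σ hσ
    | succ n ih =>
      intro σ hσ
      rw [hgeq σ hσ]
      have hb1 : ∀ t ∈ Icc (0:ℝ) σ, ‖G t * g t‖ ≤ D * (Mg * (D * t) ^ n / n.factorial) := by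
        intro t ht
        have htI : t ∈ Icc (0:ℝ) 1 := ⟨ht.1, ht.2.trans hσ.2⟩
        exact (norm_mul_le _ _).trans
          (mul_le_mul (hGnorm t htI) (ih t htI) (norm_nonneg _) hD0)
      have hptw : ∀ t : ℝ, D * (Mg * (D * t) ^ n / n.factorial)
          = (D * Mg * D ^ n / n.factorial) * t ^ n := fun t => by rw [mul_pow]; ring
      calc ‖∫ t in (0:ℝ)..σ, G t * g t‖
          ≤ ∫ t in (0:ℝ)..σ, ‖G t * g t‖ :=
            intervalIntegral.norm_integral_le_integral_norm hσ.1
        _ ≤ ∫ t in (0:ℝ)..σ, D * (Mg * (D * t) ^ n / n.factorial) := by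
            apply intervalIntegral.integral_mono_on hσ.1 ((hGgint σ hσ).norm) ?_ hb1
            apply Continuous.intervalIntegrable
            fun_prop
        _ = (D * Mg * D ^ n / n.factorial) * ((σ ^ (n + 1) - 0 ^ (n + 1)) / (n + 1)) := by
            simp only [hptw]
            rw [intervalIntegral.integral_const_mul, integral_pow]
        _ = Mg * (D * σ) ^ (n + 1) / (n + 1).factorial := by
            have hfac : (n.factorial : ℝ) ≠ 0 := Nat.cast_ne_zero.2 n.factorial_ne_zero
            have hn1 : ((n : ℝ) + 1) ≠ 0 := by positivity
            rw [zero_pow (Nat.succ_ne_zero n), Nat.factorial_succ, mul_pow]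
            push_cast
            field_simp
            ring
  -- conclude that g s = 0
  have hgzero : A s * J = J * A s := by
    have hlim : Filter.Tendsto (fun n : ℕ => Mg * (D * s) ^ n / n.factorial)
        Filter.atTop (nhds 0) := by
      have h0 := FloorSemiring.tendsto_pow_div_factorial_atTop (K := ℝ) (D * s)
      have := h0.const_mul Mg
      simpa [mul_div_assoc] using this
    have hle : ‖g s‖ ≤ 0 := ge_of_tendsto' hlim (fun n => hind n s hs)
    have : g s = 0 := norm_le_zero_iff.1 hle
    exact sub_eq_zero.1 this
  -- A s commutes with multiplication by I, hence is complex linear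
  have hcx : ∀ x, W (s, z₀) (Complex.I • x) = Complex.I • W (s, z₀) x := by
    intro x
    have h1 := DFunLike.congr_fun hgzero x
    simpa only [hJdef, hAdef, ContinuousLinearMap.mul_apply, ContinuousLinearMap.smul_apply,
      ContinuousLinearMap.id_apply] using h1
  have key : ∀ (c : ℂ) (x : Fin m → ℂ), W (s, z₀) (c • x) = c • W (s, z₀) x := by
    intro c x
    have hdecomp : ∀ y : Fin m → ℂ, c • y = c.re • y + c.im • Complex.I • y := by
      intro y
      conv_lhs => rw [← Complex.re_add_im c]
      rw [add_smul, mul_smul, Complex.coe_smul, Complex.coe_smul]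
    calc W (s, z₀) (c • x) = W (s, z₀) (c.re • x + c.im • Complex.I • x) := by rw [hdecomp]
      _ = c.re • W (s, z₀) x + c.im • W (s, z₀) (Complex.I • x) := by
          rw [map_add, map_smul, map_smul]
      _ = c.re • W (s, z₀) x + c.im • Complex.I • W (s, z₀) x := by rw [hcx]
      _ = c • W (s, z₀) x := (hdecomp (W (s, z₀) x)).symm
  let Tc : (Fin m → ℂ) →L[ℂ] (Fin m → ℂ) :=
    { toFun := W (s, z₀)
      map_add' := map_add (W (s, z₀))
      map_smul' := fun c x => key c x
      cont := (W (s, z₀)).continuous }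
  have hfinal : HasFDerivAt (fun z' => w (s, z')) Tc z₀ :=
    hasFDerivAt_of_restrictScalars ℝ (hW s hs z₀ hz₀) (by ext x; rfl)
  exact hfinal.differentiableAt
end

section
/- Let Λ be a topological space, U open in ℝᵐ × Λ, and f : U → ℝᵐ continuous such that x ↦ f(x, λ) is differentiable for each λ and D_x f : U → L(ℝᵐ; ℝᵐ) is continuous. Suppose Θ ⊆ Λ is compact with {0} × Θ ⊆ U and (D_x f)(0, λ) = Id for all λ ∈ Θ. Then for every ε > 0 there exist δ > 0 and an open set Λ' ⊇ Θ such that: (i) for all (x, λ) with ‖x‖ ≤ δ and λ ∈ Λ' one has (x, λ) ∈ U and ‖(D_x f)(x, λ) − Id‖ ≤ ε/(1+ε); and (ii) for each λ ∈ Λ' and each y with ‖y − f(0, λ)‖ < δ·(1−ε')/(1+ε') where ε' = ε/(1+ε), there exists a unique x with ‖x‖ < δ, f(x, λ) = y, and the resulting map g(y, λ) = x is continuous in (y, λ), differentiable in y, with ‖(D_y g)(y, λ) − Id‖ ≤ ε. -/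
/-!
On a uniform neighbourhood `closedBall 0 δ × Λ'` of `{0} × Θ` (tube lemma) we have
`‖D_x f - Id‖ ≤ ε' < 1`, so by the mean value inequality every slice `x ↦ f (x, λ)` is an
`ε'`-perturbation of the identity on the ball. Such a map expands distances by at least `1 - ε'`
and, by the contraction argument behind `ApproximatesLinearOn`, covers the ball of radius
`(1 - ε') δ` around `f (0, λ)`. The expansion bound gives uniqueness and joint continuity of the
inverse `g`; its derivative is `(D_x f)⁻¹` at `g`, which the Neumann series puts within
`ε' / (1 - ε') = ε` of the identity.
-/

open Set Metric Filter Topology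
open scoped NNReal

theorem exists_nnreal_eq_div_one_add {ε : ℝ} (hε : 0 < ε) :
    ∃ q : ℝ≥0, (q : ℝ) = ε / (1 + ε) ∧ 0 < q ∧ q < 1 ∧ (q : ℝ) / (1 - q) = ε := by
  obtain ⟨q, hq⟩ : ∃ q : ℝ≥0, (q : ℝ) = ε / (1 + ε) := ⟨⟨ε / (1 + ε), by positivity⟩, rfl⟩
  refine ⟨q, hq, ?_, ?_, ?_⟩
  · rw [← NNReal.coe_pos, hq]
    positivity
  · rw [← NNReal.coe_lt_one, hq]
    exact (div_lt_one (by positivity)).2 (by linarith)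
  · rw [hq]
    field_simp
    ring

theorem exists_closedBall_prod_subset_of_isCompact {X Y : Type*} [PseudoMetricSpace X]
    [TopologicalSpace Y] {x₀ : X} {Θ : Set Y} (hΘ : IsCompact Θ) {W : Set (X × Y)}
    (hW : IsOpen W) (hΘW : ∀ y ∈ Θ, (x₀, y) ∈ W) :
    ∃ δ > 0, ∃ v : Set Y, IsOpen v ∧ Θ ⊆ v ∧ closedBall x₀ δ ×ˢ v ⊆ W := by
  obtain ⟨u, v, hu, hv, hx₀u, hΘv, huv⟩ := generalized_tube_lemma isCompact_singleton hΘ hW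
    (by rintro ⟨x, y⟩ ⟨rfl, hy⟩; exact hΘW y hy)
  obtain ⟨δ, hδ, hδu⟩ := nhds_basis_closedBall.mem_iff.1 (hu.mem_nhds (hx₀u rfl))
  exact ⟨δ, hδ, v, hv, hΘv, (prod_mono hδu subset_rfl).trans huv⟩

theorem exists_closedBall_prod_subset_norm_sub_lt {X Y F : Type*} [PseudoMetricSpace X]
    [TopologicalSpace Y] [SeminormedAddCommGroup F] {U : Set (X × Y)} (hU : IsOpen U)
    {φ : X × Y → F} (hφ : ContinuousOn φ U) {x₀ : X} {Θ : Set Y} (hΘ : IsCompact Θ)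
    (hΘU : ∀ y ∈ Θ, (x₀, y) ∈ U) {a : F} (hΘa : ∀ y ∈ Θ, φ (x₀, y) = a) {q : ℝ} (hq : 0 < q) :
    ∃ δ > 0, ∃ v : Set Y, IsOpen v ∧ Θ ⊆ v ∧ closedBall x₀ δ ×ˢ v ⊆ U ∧
      ∀ p ∈ closedBall x₀ δ ×ˢ v, ‖φ p - a‖ < q := by
  have hW : IsOpen {p | p ∈ U ∧ ‖φ p - a‖ < q} :=
    (hφ.sub continuousOn_const).norm.isOpen_inter_preimage hU isOpen_Iio
  obtain ⟨δ, hδ, v, hv, hΘv, hW⟩ := exists_closedBall_prod_subset_of_isCompact hΘ hW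
    fun y hy => ⟨hΘU y hy, by simpa [hΘa y hy]⟩
  exact ⟨δ, hδ, v, hv, hΘv, fun p hp => (hW hp).1, fun p hp => (hW hp).2⟩

theorem isUnit_of_norm_sub_one_lt_one {R : Type*} [NormedRing R] [HasSummableGeomSeries R] {T : R}
    (hT : ‖T - 1‖ < 1) : IsUnit T := by
  simpa using isUnit_one_sub_of_norm_lt_one (x := 1 - T) (by rwa [norm_sub_rev])

theorem norm_inverse_sub_one_le {R : Type*} [NormedRing R] [HasSummableGeomSeries R] {T : R}
    {q : ℝ} (hT : ‖T - 1‖ ≤ q) (hq : q < 1) : ‖Ring.inverse T - 1‖ ≤ q / (1 - q) := by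
  have hunit : IsUnit T := isUnit_of_norm_sub_one_lt_one (hT.trans_lt hq)
  set D := Ring.inverse T - 1
  -- `D = T⁻¹ (1 - T) = (1 + D) (1 - T)`, so `‖D‖ ≤ q + ‖D‖ q` without any bound on `‖1‖`.
  have hD : D = (1 - T) + D * (1 - T) := by
    have h := Ring.inverse_mul_cancel T hunit
    calc D = Ring.inverse T * (1 - T) := by rw [mul_sub, mul_one, h]
      _ = (1 - T) + D * (1 - T) := by simp only [D]; noncomm_ring
  have hD' : ‖D‖ ≤ q + ‖D‖ * q := by
    calc ‖D‖ = ‖(1 - T) + D * (1 - T)‖ := congrArg norm hD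
      _ ≤ ‖1 - T‖ + ‖D‖ * ‖1 - T‖ := (norm_add_le _ _).trans (add_le_add le_rfl (norm_mul_le _ _))
      _ ≤ q + ‖D‖ * q := by rw [norm_sub_rev]; gcongr
  rw [le_div_iff₀ (sub_pos.2 hq)]
  linarith

theorem HasFDerivAt.of_local_left_inverse_of_isUnit {𝕜 E : Type*} [NontriviallyNormedField 𝕜]
    [NormedAddCommGroup E] [NormedSpace 𝕜 E] {f g : E → E} {T : E →L[𝕜] E} {a : E}
    (hT : IsUnit T) (hg : ContinuousAt g a) (hf : HasFDerivAt f T (g a))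
    (hfg : ∀ᶠ y in 𝓝 a, f (g y) = y) : HasFDerivAt g (Ring.inverse T) a := by
  obtain ⟨u, rfl⟩ := hT
  rw [Ring.inverse_unit]
  exact HasFDerivAt.of_local_left_inverse (f' := ContinuousLinearEquiv.ofUnit u) hg hf hfg

theorem Convex.approximatesLinearOn_of_norm_sub_le {E F : Type*} [NormedAddCommGroup E]
    [NormedSpace ℝ E] [NormedAddCommGroup F] [NormedSpace ℝ F] {s : Set E} (hs : Convex ℝ s)
    {f : E → F} {f' : E → E →L[ℝ] F} {φ : E →L[ℝ] F} {c : ℝ≥0}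
    (hf : ∀ x ∈ s, HasFDerivWithinAt f (f' x) s x) (bound : ∀ x ∈ s, ‖f' x - φ‖ ≤ c) :
    ApproximatesLinearOn f φ s c := fun _ hx _ hy =>
  hs.norm_image_sub_le_of_norm_hasFDerivWithin_le' hf bound hy hx

namespace ApproximatesLinearOn

variable {𝕜 E : Type*} [NontriviallyNormedField 𝕜] [NormedAddCommGroup E] [NormedSpace 𝕜 E]
  {f : E → E} {s : Set E} {c : ℝ≥0}

theorem one_sub_mul_norm_sub_le (hf : ApproximatesLinearOn f (ContinuousLinearMap.id 𝕜 E) s c)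
    {x y : E} (hx : x ∈ s) (hy : y ∈ s) : (1 - c) * ‖x - y‖ ≤ ‖f x - f y‖ := by
  have h := hf x hx y hy
  have := norm_sub_le (f x - f y) (f x - f y - (x - y))
  rw [sub_sub_cancel] at this
  simp only [ContinuousLinearMap.coe_id', id] at h
  linarith

theorem surjOn_closedBall_of_id [CompleteSpace E]
    (hf : ApproximatesLinearOn f (ContinuousLinearMap.id 𝕜 E) s c) {b : E} {δ : ℝ} (hδ : 0 ≤ δ)
    (hs : closedBall b δ ⊆ s) : SurjOn f (closedBall b δ) (closedBall (f b) ((1 - c) * δ)) := by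
  simpa using hf.surjOn_closedBall_of_nonlinearRightInverse ⟨id, 1, fun _ => by simp, fun _ => rfl⟩
    hδ hs

end ApproximatesLinearOn

theorem isOpen_setOf_norm_sub_lt {Λ E : Type*} [TopologicalSpace Λ] [NormedAddCommGroup E]
    {U : Set (E × Λ)} {f : E × Λ → E} {v : Set Λ} (hU : IsOpen U) (hf : ContinuousOn f U)
    (hv : IsOpen v) (h0U : ∀ l ∈ v, ((0 : E), l) ∈ U) (r : ℝ) :
    IsOpen {p : E × Λ | p.2 ∈ v ∧ ‖p.1 - f (0, p.2)‖ < r} := by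
  have hcont : ContinuousOn (fun p : E × Λ => ‖p.1 - f (0, p.2)‖) {p | p.2 ∈ v} := by
    refine (continuousOn_fst.sub fun p hp => ?_).norm
    exact ((hf.continuousAt (hU.mem_nhds (h0U p.2 hp))).comp (f := fun p : E × Λ => (0, p.2))
      (continuous_const.prodMk continuous_snd).continuousAt).continuousWithinAt
  exact hcont.isOpen_inter_preimage (hv.preimage continuous_snd) isOpen_Iio

section ParametricInverse

variable {Λ E : Type*} [NormedAddCommGroup E] [NormedSpace ℝ E]
  {U : Set (E × Λ)} {f : E × Λ → E} {f' : E × Λ → E →L[ℝ] E} {C : Set E} {v : Set Λ} {q : ℝ≥0}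

theorem approximatesLinearOn_slice (hdiff : ∀ p ∈ U, HasFDerivAt (fun x => f (x, p.2)) (f' p) p.1)
    (hC : Convex ℝ C) (hCU : C ×ˢ v ⊆ U)
    (hf'q : ∀ p ∈ C ×ˢ v, ‖f' p - ContinuousLinearMap.id ℝ E‖ ≤ q) {l : Λ} (hl : l ∈ v) :
    ApproximatesLinearOn (fun x => f (x, l)) (ContinuousLinearMap.id ℝ E) C q :=
  hC.approximatesLinearOn_of_norm_sub_le
    (fun x hx => (hdiff (x, l) (hCU ⟨hx, hl⟩)).hasFDerivWithinAt) (fun x hx => hf'q (x, l) ⟨hx, hl⟩)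

theorem exists_solution [CompleteSpace E]
    (hdiff : ∀ p ∈ U, HasFDerivAt (fun x => f (x, p.2)) (f' p) p.1) {δ r : ℝ} (hδ : 0 ≤ δ)
    (hCU : closedBall (0 : E) δ ×ˢ v ⊆ U)
    (hf'q : ∀ p ∈ closedBall (0 : E) δ ×ˢ v, ‖f' p - ContinuousLinearMap.id ℝ E‖ ≤ q)
    (hq : q < 1) (hr : r ≤ (1 - q) * δ) :
    ∃ g : E × Λ → E, ∀ p ∈ {p : E × Λ | p.2 ∈ v ∧ ‖p.1 - f (0, p.2)‖ < r},
      ‖g p‖ < δ ∧ f (g p, p.2) = p.1 ∧ ∀ x ∈ closedBall (0 : E) δ, f (x, p.2) = p.1 → x = g p := by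
  have hq' : (0 : ℝ) < 1 - q := sub_pos.2 (NNReal.coe_lt_one.2 hq)
  have hslice {l : Λ} (hl : l ∈ v) :=
    approximatesLinearOn_slice hdiff (convex_closedBall 0 δ) hCU hf'q hl
  have hsol : ∀ p ∈ {p : E × Λ | p.2 ∈ v ∧ ‖p.1 - f (0, p.2)‖ < r},
      ∃ x ∈ closedBall (0 : E) δ, f (x, p.2) = p.1 := fun p hp =>
    (hslice hp.1).surjOn_closedBall_of_id hδ subset_rfl
      (mem_closedBall_iff_norm.2 (hp.2.le.trans hr))
  choose! g hgδ hfg using hsol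
  refine ⟨g, fun p hp => ⟨?_, hfg p hp, fun x hx hfx => ?_⟩⟩
  · have h := (hslice hp.1).one_sub_mul_norm_sub_le (hgδ p hp) (mem_closedBall_self hδ)
    rw [sub_zero, hfg p hp] at h
    exact lt_of_mul_lt_mul_left (h.trans_lt (hp.2.trans_le hr)) hq'.le
  · have h := (hslice hp.1).one_sub_mul_norm_sub_le hx (hgδ p hp)
    rw [hfx, hfg p hp, sub_self, norm_zero] at h
    exact sub_eq_zero.1 (norm_le_zero_iff.1 (nonpos_of_mul_nonpos_right h hq'))

variable [TopologicalSpace Λ] {S : Set (E × Λ)} {g : E × Λ → E}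

theorem continuousOn_of_forall_eq (hU : IsOpen U) (hf : ContinuousOn f U)
    (hdiff : ∀ p ∈ U, HasFDerivAt (fun x => f (x, p.2)) (f' p) p.1)
    (hC : Convex ℝ C) (hCU : C ×ˢ v ⊆ U)
    (hf'q : ∀ p ∈ C ×ˢ v, ‖f' p - ContinuousLinearMap.id ℝ E‖ ≤ q) (hq : q < 1)
    (hgC : ∀ p ∈ S, (g p, p.2) ∈ C ×ˢ v) (hfg : ∀ p ∈ S, f (g p, p.2) = p.1) :
    ContinuousOn g S := by
  intro p₀ hp₀
  have hq' : (0 : ℝ) < 1 - q := sub_pos.2 (NNReal.coe_lt_one.2 hq)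
  set B : E × Λ → ℝ := fun p => (‖p.1 - p₀.1‖ + ‖f (g p₀, p₀.2) - f (g p₀, p.2)‖) / (1 - q)
  have hbound : ∀ p ∈ S, ‖g p - g p₀‖ ≤ B p := by
    intro p hp
    rw [le_div_iff₀ hq', mul_comm]
    calc (1 - q) * ‖g p - g p₀‖ ≤ ‖f (g p, p.2) - f (g p₀, p.2)‖ :=
          (approximatesLinearOn_slice hdiff hC hCU hf'q (hgC p hp).2).one_sub_mul_norm_sub_le
            (hgC p hp).1 (hgC p₀ hp₀).1
      _ = ‖(p.1 - p₀.1) + (f (g p₀, p₀.2) - f (g p₀, p.2))‖ := by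
          rw [hfg p hp, hfg p₀ hp₀]; congr 1; abel
      _ ≤ _ := norm_add_le _ _
  have hB : Tendsto B (𝓝 p₀) (𝓝 0) := by
    have hfx₀ : ContinuousAt (fun p : E × Λ => f (g p₀, p.2)) p₀ :=
      (hf.continuousAt (hU.mem_nhds (hCU (hgC p₀ hp₀)))).comp
        (f := fun p : E × Λ => (g p₀, p.2)) (continuous_const.prodMk continuous_snd).continuousAt
    have : ContinuousAt B p₀ :=
      ((continuous_fst.sub continuous_const).norm.continuousAt.add
        (continuousAt_const.sub hfx₀).norm).div_const _
    simpa [B] using this.tendsto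
  rw [ContinuousWithinAt, tendsto_iff_norm_sub_tendsto_zero]
  exact squeeze_zero' (Eventually.of_forall fun p => norm_nonneg _)
    (eventually_nhdsWithin_of_forall hbound) (hB.mono_left nhdsWithin_le_nhds)

theorem hasFDerivAt_of_forall_eq [CompleteSpace E]
    (hdiff : ∀ p ∈ U, HasFDerivAt (fun x => f (x, p.2)) (f' p) p.1) (hCU : C ×ˢ v ⊆ U)
    (hf'q : ∀ p ∈ C ×ˢ v, ‖f' p - ContinuousLinearMap.id ℝ E‖ ≤ q) (hq : q < 1)
    (hS : IsOpen S) (hgc : ContinuousOn g S)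
    (hgC : ∀ p ∈ S, (g p, p.2) ∈ C ×ˢ v) (hfg : ∀ p ∈ S, f (g p, p.2) = p.1)
    {p : E × Λ} (hp : p ∈ S) :
    HasFDerivAt (fun y => g (y, p.2)) (Ring.inverse (f' (g p, p.2))) p.1 := by
  have hslice : ContinuousAt (fun y : E => (y, p.2)) p.1 :=
    (continuous_id.prodMk continuous_const).continuousAt
  have hSp : ∀ᶠ y in 𝓝 p.1, (y, p.2) ∈ S := hslice.preimage_mem_nhds (hS.mem_nhds hp)
  have hunit :=
    isUnit_of_norm_sub_one_lt_one ((hf'q _ (hgC p hp)).trans_lt (NNReal.coe_lt_one.2 hq))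
  exact HasFDerivAt.of_local_left_inverse_of_isUnit hunit
    ((hgc.continuousAt (hS.mem_nhds hp)).comp hslice) (hdiff _ (hCU (hgC p hp)))
    (hSp.mono fun y hy => hfg _ hy)

theorem continuousOn_inverse_of_forall_mem [CompleteSpace E] (hU : IsOpen U)
    (hf' : ContinuousOn f' U) (hCU : C ×ˢ v ⊆ U)
    (hf'q : ∀ p ∈ C ×ˢ v, ‖f' p - ContinuousLinearMap.id ℝ E‖ ≤ q) (hq : q < 1)
    (hgc : ContinuousOn g S) (hgC : ∀ p ∈ S, (g p, p.2) ∈ C ×ˢ v) :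
    ContinuousOn (fun p => Ring.inverse (f' (g p, p.2))) S := by
  intro p hp
  obtain ⟨u, hu⟩ :=
    isUnit_of_norm_sub_one_lt_one ((hf'q _ (hgC p hp)).trans_lt (NNReal.coe_lt_one.2 hq))
  have hinv : ContinuousAt Ring.inverse (f' (g p, p.2)) := hu ▸ NormedRing.inverse_continuousAt u
  exact hinv.comp_continuousWithinAt (f := fun p => f' (g p, p.2))
    ((hf'.continuousAt (hU.mem_nhds (hCU (hgC p hp)))).comp_continuousWithinAt
      (f := fun p => (g p, p.2)) ((hgc p hp).prodMk continuousWithinAt_snd))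

theorem exists_continuousOn_inverse_of_closedBall_prod_subset [CompleteSpace E] (hU : IsOpen U)
    (hf : ContinuousOn f U) (hdiff : ∀ p ∈ U, HasFDerivAt (fun x => f (x, p.2)) (f' p) p.1)
    (hf' : ContinuousOn f' U) {δ r : ℝ} (hδ : 0 ≤ δ) (hv : IsOpen v)
    (hCU : closedBall (0 : E) δ ×ˢ v ⊆ U)
    (hf'q : ∀ p ∈ closedBall (0 : E) δ ×ˢ v, ‖f' p - ContinuousLinearMap.id ℝ E‖ ≤ q)
    (hq : q < 1) (hr : r ≤ (1 - q) * δ) :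
    ∃ g : E × Λ → E,
      (∀ p ∈ {p : E × Λ | p.2 ∈ v ∧ ‖p.1 - f (0, p.2)‖ < r},
        ‖g p‖ < δ ∧ f (g p, p.2) = p.1 ∧
        (∀ x ∈ closedBall (0 : E) δ, f (x, p.2) = p.1 → x = g p) ∧
        HasFDerivAt (fun y => g (y, p.2)) (Ring.inverse (f' (g p, p.2))) p.1 ∧
        ‖Ring.inverse (f' (g p, p.2)) - ContinuousLinearMap.id ℝ E‖ ≤ q / (1 - q)) ∧
      ContinuousOn g {p : E × Λ | p.2 ∈ v ∧ ‖p.1 - f (0, p.2)‖ < r} ∧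
      ContinuousOn (fun p => Ring.inverse (f' (g p, p.2)))
        {p : E × Λ | p.2 ∈ v ∧ ‖p.1 - f (0, p.2)‖ < r} := by
  obtain ⟨g, hg⟩ := exists_solution hdiff hδ hCU hf'q hq hr
  have hgC : ∀ p ∈ {p : E × Λ | p.2 ∈ v ∧ ‖p.1 - f (0, p.2)‖ < r},
      (g p, p.2) ∈ closedBall 0 δ ×ˢ v := fun p hp =>
    ⟨mem_closedBall_zero_iff.2 (hg p hp).1.le, hp.1⟩
  have hfg := fun p hp => (hg p hp).2.1
  have hgc := continuousOn_of_forall_eq hU hf hdiff (convex_closedBall 0 δ) hCU hf'q hq hgC hfg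
  have hS := isOpen_setOf_norm_sub_lt hU hf hv (fun l hl => hCU ⟨mem_closedBall_self hδ, hl⟩) r
  refine ⟨g, fun p hp => ⟨(hg p hp).1, hfg p hp, (hg p hp).2.2,
    hasFDerivAt_of_forall_eq hdiff hCU hf'q hq hS hgc hgC hfg hp,
    norm_inverse_sub_one_le (hf'q _ (hgC p hp)) (NNReal.coe_lt_one.2 hq)⟩, hgc,
    continuousOn_inverse_of_forall_mem hU hf' hCU hf'q hq hgc hgC⟩

end ParametricInverse

/-- inverse function theorem with a continuous parameter: let `f : U → ℝᵐ` be
continuous on an open `U ⊆ ℝᵐ × Λ`, differentiable in `x` with continuous derivative `D_x f`,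
and suppose `Θ ⊆ Λ` is compact with `(0, λ) ∈ U` and `(D_x f)(0, λ) = Id` for all `λ ∈ Θ`.
Then for every `ε > 0` there are `δ > 0` and an open `Λ' ⊇ Θ` such that:
(i) whenever `‖x‖ ≤ δ` and `λ ∈ Λ'`, `(x, λ) ∈ U` and `‖(D_x f)(x, λ) − Id‖ ≤ ε/(1+ε)`;
(ii) there are maps `g`, `g'` such that for `λ ∈ Λ'` and `‖y − f(0,λ)‖ < δ(1−ε')/(1+ε')`
(where `ε' = ε/(1+ε)`), `g(y,λ)` is the unique `x` with `‖x‖ < δ` and `f(x,λ) = y`, `g` is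
continuous in `(y,λ)`, differentiable in `y` with derivative `g'` continuous, and
`‖(D_y g)(y,λ) − Id‖ ≤ ε`. -/
theorem stmt_14 {Λ : Type*} [TopologicalSpace Λ] (m : ℕ)
    (U : Set (EuclideanSpace ℝ (Fin m) × Λ)) (hU : IsOpen U)
    (f : EuclideanSpace ℝ (Fin m) × Λ → EuclideanSpace ℝ (Fin m))
    (hf : ContinuousOn f U)
    (f' : EuclideanSpace ℝ (Fin m) × Λ →
      (EuclideanSpace ℝ (Fin m) →L[ℝ] EuclideanSpace ℝ (Fin m)))
    (hdiff : ∀ p ∈ U, HasFDerivAt (fun x => f (x, p.2)) (f' p) p.1)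
    (hf' : ContinuousOn f' U)
    (Θ : Set Λ) (hΘ : IsCompact Θ)
    (hΘU : ∀ l ∈ Θ, ((0 : EuclideanSpace ℝ (Fin m)), l) ∈ U)
    (hΘid : ∀ l ∈ Θ, f' (0, l) = ContinuousLinearMap.id ℝ (EuclideanSpace ℝ (Fin m))) :
    ∀ ε > (0 : ℝ), ∃ δ > (0 : ℝ), ∃ Λ' : Set Λ, IsOpen Λ' ∧ Θ ⊆ Λ' ∧
      (∀ (x : EuclideanSpace ℝ (Fin m)) (l : Λ), ‖x‖ ≤ δ → l ∈ Λ' →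
        (x, l) ∈ U ∧
        ‖f' (x, l) - ContinuousLinearMap.id ℝ (EuclideanSpace ℝ (Fin m))‖ ≤ ε / (1 + ε)) ∧
      (∃ g : EuclideanSpace ℝ (Fin m) × Λ → EuclideanSpace ℝ (Fin m),
       ∃ g' : EuclideanSpace ℝ (Fin m) × Λ →
          (EuclideanSpace ℝ (Fin m) →L[ℝ] EuclideanSpace ℝ (Fin m)),
        (∀ (y : EuclideanSpace ℝ (Fin m)) (l : Λ), l ∈ Λ' →
          ‖y - f (0, l)‖ < δ * (1 - ε / (1 + ε)) / (1 + ε / (1 + ε)) →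
            (‖g (y, l)‖ < δ ∧ f (g (y, l), l) = y ∧
              (∀ x : EuclideanSpace ℝ (Fin m), ‖x‖ < δ → f (x, l) = y → x = g (y, l)) ∧
              HasFDerivAt (fun y' => g (y', l)) (g' (y, l)) y ∧
              ‖g' (y, l) - ContinuousLinearMap.id ℝ (EuclideanSpace ℝ (Fin m))‖ ≤ ε)) ∧
        ContinuousOn g {p : EuclideanSpace ℝ (Fin m) × Λ |
          p.2 ∈ Λ' ∧ ‖p.1 - f (0, p.2)‖ < δ * (1 - ε / (1 + ε)) / (1 + ε / (1 + ε))} ∧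
        ContinuousOn g' {p : EuclideanSpace ℝ (Fin m) × Λ |
          p.2 ∈ Λ' ∧ ‖p.1 - f (0, p.2)‖ < δ * (1 - ε / (1 + ε)) / (1 + ε / (1 + ε))}) := by
  intro ε hε
  -- `ε / (1 + ε)` is the `q` for which the Neumann bound `q / (1 - q)` equals `ε`.
  obtain ⟨q, hqε', hq0, hq, hqε⟩ := exists_nnreal_eq_div_one_add hε
  obtain ⟨δ, hδ, v, hv, hΘv, hCU, hf'lt⟩ :=
    exists_closedBall_prod_subset_norm_sub_lt hU hf' hΘ hΘU hΘid (NNReal.coe_pos.2 hq0)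
  have hf'q := fun p hp => (hf'lt p hp).le
  rw [← hqε']
  have hr : δ * (1 - q) / (1 + q) ≤ (1 - q) * δ := by
    rw [mul_comm (1 - (q : ℝ))]
    exact div_le_self (mul_nonneg hδ.le (sub_nonneg.2 (NNReal.coe_le_one.2 hq.le))) (by simp)
  obtain ⟨g, hg, hgc, hg'c⟩ := exists_continuousOn_inverse_of_closedBall_prod_subset hU hf hdiff
    hf' hδ.le hv hCU hf'q hq hr
  refine ⟨δ, hδ, v, hv, hΘv, fun x l hx hl => ?_, g, _, fun y l hl hy => ?_, hgc, hg'c⟩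
  · have hxl := mk_mem_prod (mem_closedBall_zero_iff.2 hx) hl
    exact ⟨hCU hxl, hf'q _ hxl⟩
  · obtain ⟨hgδ, hfg, huniq, hderiv, hbound⟩ := hg (y, l) ⟨hl, hy⟩
    exact ⟨hgδ, hfg, fun x hx => huniq x (mem_closedBall_zero_iff.2 hx.le), hderiv, hqε ▸ hbound⟩
end
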